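/- arXiv:2510.20153 — 6 statements merged into one kernel-verified Lean document; each statement's English description precedes it below -/
import Mathlib

section
/- For c = 2√2 − 2 and all real x ≥ 3, c^{x+1}·(1 − 1/(x+1))^{x+1} ≤ c^x·(1 − 1/x)^x. -/
/-! Since `c ^ (x + 1) = c ^ x * c` and `1 - 1/x = (1 - 1/x²) · (1 - 1/(x+1))`, the claim amounts to
`c ≤ (1 - 1/x²) ^ x · (1 + 1/x)`. Bernoulli's inequality gives `(1 - 1/x²) ^ x ≥ 1 - 1/x`, so the right
side is at least `1 - 1/x² ≥ 8/9`, while `2√2 - 2 < 8/9`. -/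

open Real

lemma one_sub_inv_le_rpow_one_sub_inv_sq {x : ℝ} (hx : 1 ≤ x) : 1 - 1 / x ≤ (1 - 1 / x ^ 2) ^ x := by
  have hx0 : 0 < x := by linarith
  have hs : -1 ≤ -(1 / x ^ 2) := by
    rw [neg_le_neg_iff, div_le_one (by positivity)]; nlinarith
  calc 1 - 1 / x = 1 + x * -(1 / x ^ 2) := by field_simp; ring
    _ ≤ (1 + -(1 / x ^ 2)) ^ x := one_add_mul_self_le_rpow_one_add hs hx
    _ = (1 - 1 / x ^ 2) ^ x := by rw [← sub_eq_add_neg]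

lemma one_sub_inv_rpow_eq {x : ℝ} (hx : 1 ≤ x) :
    (1 - 1 / x) ^ x = (1 - 1 / x ^ 2) ^ x * (1 + 1 / x) * (1 - 1 / (x + 1)) ^ (x + 1) := by
  have hx0 : 0 < x := by linarith
  have hy : 0 ≤ 1 - 1 / x ^ 2 := by
    rw [sub_nonneg, div_le_one (by positivity)]; nlinarith
  have hb : 0 < 1 - 1 / (x + 1) := by
    rw [sub_pos, div_lt_one (by positivity)]; linarith
  have hfactor : 1 - 1 / x = (1 - 1 / x ^ 2) * (1 - 1 / (x + 1)) := by
    field_simp; ring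
  have hcancel : (1 + 1 / x) * (1 - 1 / (x + 1)) = 1 := by
    field_simp; ring
  rw [hfactor, mul_rpow hy hb.le, rpow_add_one hb.ne']
  linear_combination -((1 - 1 / x ^ 2) ^ x * (1 - 1 / (x + 1)) ^ x) * hcancel

lemma rpow_succ_mul_one_sub_inv_le {c x : ℝ} (hx : 1 ≤ x) (hc₀ : 0 ≤ c) (hc : c ≤ 1 - 1 / x ^ 2) :
    c ^ (x + 1) * (1 - 1 / (x + 1)) ^ (x + 1) ≤ c ^ x * (1 - 1 / x) ^ x := by
  have hx0 : 0 < x := by linarith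
  have hratio : c ≤ (1 - 1 / x ^ 2) ^ x * (1 + 1 / x) :=
    calc c ≤ 1 - 1 / x ^ 2 := hc
      _ = (1 - 1 / x) * (1 + 1 / x) := by ring
      _ ≤ (1 - 1 / x ^ 2) ^ x * (1 + 1 / x) := by
        gcongr
        exact one_sub_inv_le_rpow_one_sub_inv_sq hx
  have hb : 0 ≤ 1 - 1 / (x + 1) := by
    rw [sub_nonneg, div_le_one (by positivity)]; linarith
  rw [rpow_add_one' hc₀ (by linarith), mul_assoc, one_sub_inv_rpow_eq hx]
  gcongr

theorem stmt_0 (c : ℝ) (hc : c = 2 * Real.sqrt 2 - 2) (x : ℝ) (hx : 3 ≤ x) :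
    c ^ (x + 1) * (1 - 1 / (x + 1)) ^ (x + 1) ≤ c ^ x * (1 - 1 / x) ^ x := by
  have hsqrt : √2 ^ 2 = 2 := sq_sqrt (by norm_num)
  have hsqrt₀ : 0 ≤ √2 := sqrt_nonneg 2
  have hc₀ : 0 ≤ c := by nlinarith
  have hinv : 1 / x ^ 2 ≤ 1 / 9 := by gcongr; nlinarith
  exact rpow_succ_mul_one_sub_inv_le (by linarith) hc₀ (by nlinarith)
end

section
/- For c = 2√2 − 2 and any nonnegative reals y₁,…,y_m with Σᵢ yᵢ ≤ 1, we have c·Σᵢ yᵢ + c^m·∏ᵢ(1 − yᵢ) ≤ 1. -/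
lemma sqrt2_lb : (1.41421 : ℝ) ≤ Real.sqrt 2 := by
  nlinarith [Real.sq_sqrt (by norm_num : (2:ℝ) ≥ 0), Real.sqrt_nonneg 2]

lemma sqrt2_ub : Real.sqrt 2 ≤ (1.41422 : ℝ) := by
  nlinarith [Real.sq_sqrt (by norm_num : (2:ℝ) ≥ 0), Real.sqrt_nonneg 2]

lemma amgm (m : ℕ) (hm : 0 < m) (z : Fin m → ℝ) (hz : ∀ i, 0 ≤ z i) :
    ∏ i, z i ≤ ((∑ i, z i) / m) ^ m := by
  have hm' : (m : ℝ) ≠ 0 := Nat.cast_ne_zero.mpr hm.ne'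
  have h := Real.geom_mean_le_arith_mean_weighted Finset.univ (fun _ => (m:ℝ)⁻¹) z
    (fun i _ => by positivity) (by simp [Finset.card_univ]; field_simp) (fun i _ => hz i)
  have h2 : (∏ i, z i ^ ((m:ℝ)⁻¹)) ^ m ≤ (∑ i, (m:ℝ)⁻¹ * z i) ^ m := by
    apply pow_le_pow_left₀ (Finset.prod_nonneg fun i _ => Real.rpow_nonneg (hz i) _) h
  calc ∏ i, z i = (∏ i, z i ^ ((m:ℝ)⁻¹)) ^ m := by
        rw [← Finset.prod_pow]
        refine Finset.prod_congr rfl fun i _ => ?_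
        rw [← Real.rpow_natCast (z i ^ ((m:ℝ)⁻¹)) m, ← Real.rpow_mul (hz i),
          inv_mul_cancel₀ hm', Real.rpow_one]
    _ ≤ (∑ i, (m:ℝ)⁻¹ * z i) ^ m := h2
    _ = ((∑ i, z i) / m) ^ m := by rw [← Finset.mul_sum]; ring_nf

-- the case m = 2 of the step
lemma step2 (c S : ℝ) (hc : c = 2*Real.sqrt 2 - 2) (hS0 : 0 ≤ S) (hS1 : S ≤ 1) :
    c * (1 - S/3)^3 ≤ (1 - S/2)^2 := by
  have h1 := sqrt2_lb
  have h2 := sqrt2_ub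
  subst hc
  nlinarith [sq_nonneg (1-S), sq_nonneg S, mul_nonneg hS0 (sq_nonneg (1-S)),
    mul_nonneg (sub_nonneg.2 hS1) (sq_nonneg (1-S)), mul_nonneg (sub_nonneg.2 hS1) (sq_nonneg S)]


lemma quadstep (c S N : ℝ) (hc : c = 2*Real.sqrt 2 - 2) (hS0 : 0 ≤ S) (hS1 : S ≤ 1)
    (hN : 3 ≤ N) : c * (N + 1 - S)^2 ≤ (N + 1) * (N + 1 - 2*S) := by
  have h1 := sqrt2_lb
  have h2 := sqrt2_ub
  subst hc
  nlinarith [mul_nonneg (sub_nonneg.2 hN) (sub_nonneg.2 hS1), sq_nonneg (N-3),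
    mul_nonneg (sub_nonneg.2 hS1) (sub_nonneg.2 hS1), sq_nonneg (N+1-S),
    mul_nonneg (mul_nonneg (sub_nonneg.2 hN) (sub_nonneg.2 hS1)) hS0,
    mul_nonneg (sub_nonneg.2 hN) (sub_nonneg.2 hN)]

lemma step3 (c S : ℝ) (hc : c = 2*Real.sqrt 2 - 2) (hS0 : 0 ≤ S) (hS1 : S ≤ 1)
    (n : ℕ) (hn : 3 ≤ n) :
    c * (1 - S/(n+1))^(n+1) ≤ (1 - S/n)^n := by
  have hc0 : 0 ≤ c := by have := sqrt2_lb; rw [hc]; linarith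
  set N : ℝ := (n : ℝ) with hN
  have hN3 : (3:ℝ) ≤ N := by rw [hN]; exact_mod_cast hn
  have hNpos : 0 < N := by linarith
  set A : ℝ := 1 - S/(N+1) with hA
  set B : ℝ := 1 - S/N with hB
  have hApos : 0 < A := by
    rw [hA]; have : S/(N+1) < 1 := by
      rw [div_lt_one (by linarith)]; linarith
    linarith
  have hBpos : 0 < B := by
    rw [hB]; have : S/N < 1 := by rw [div_lt_one hNpos]; linarith
    linarith
  -- Bernoulli: (B/A)^n ≥ 1 + n*(B/A - 1)
  have hbern : 1 + (n:ℝ) * (B/A - 1) ≤ (B/A)^n := by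
    have := one_add_mul_le_pow (a := B/A - 1) (by
      have : 0 < B/A := div_pos hBpos hApos; linarith) n
    simpa using this
  -- key: c * A ≤ 1 + n * (B/A - 1)
  have hkey : c * A ≤ 1 + (n:ℝ) * (B/A - 1) := by
    have hq := quadstep c S N hc hS0 hS1 hN3
    rw [hA, hB]
    have hA1 : (1 - S/(N+1)) = (N+1-S)/(N+1) := by field_simp
    have hB1 : (1 - S/N) = (N-S)/N := by field_simp
    rw [hA1, hB1, ← sub_nonneg]
    have hNe1 : N ≠ 0 := by linarith
    have hNe2 : (N:ℝ) + 1 ≠ 0 := by linarith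
    have hNe3 : N + 1 - S ≠ 0 := by linarith
    have e : (1 + (n:ℝ) * ((N - S) / N / ((N + 1 - S) / (N + 1)) - 1)) - c * ((N + 1 - S) / (N + 1)) = ((N+1)*(N+1-2*S) - c*(N+1-S)^2) / ((N+1)*(N+1-S)) := by
      rw [← hN]
      field_simp
      ring
    rw [e]
    apply div_nonneg (by linarith) (by nlinarith)
  have h1 : c * A^(n+1) = (c * A) * A^n := by ring
  have h2 : (B/A)^n * A^n = B^n := by
    rw [← mul_pow]; congr 1; field_simp
  calc c * (1 - S/(n+1))^(n+1) = (c * A) * A^n := by rw [h1]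
    _ ≤ (1 + (n:ℝ) * (B/A - 1)) * A^n := by
        apply mul_le_mul_of_nonneg_right hkey (by positivity)
    _ ≤ (B/A)^n * A^n := mul_le_mul_of_nonneg_right hbern (by positivity)
    _ = (1 - S/n)^n := h2

lemma stepall (c S : ℝ) (hc : c = 2*Real.sqrt 2 - 2) (hS0 : 0 ≤ S) (hS1 : S ≤ 1)
    (n : ℕ) (hn : 2 ≤ n) :
    c * (1 - S/(n+1))^(n+1) ≤ (1 - S/n)^n := by
  rcases eq_or_lt_of_le hn with h | h
  · rw [← h]; push_cast
    have := step2 c S hc hS0 hS1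
    convert this using 3 <;> norm_num
  · exact step3 c S hc hS0 hS1 n h

lemma mono (c S : ℝ) (hc : c = 2*Real.sqrt 2 - 2) (hS0 : 0 ≤ S) (hS1 : S ≤ 1) :
    ∀ n : ℕ, 2 ≤ n → (c * (1 - S/n))^n ≤ (c * (1 - S/2))^2 := by
  have hc0 : 0 ≤ c := by have := sqrt2_lb; rw [hc]; linarith
  intro n hn
  induction n, hn using Nat.le_induction with
  | base => norm_num
  | succ n hn ih =>
    have key := stepall c S hc hS0 hS1 n hn
    have hcast : ((n+1 : ℕ) : ℝ) = (n:ℝ) + 1 := by push_cast; ring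
    calc (c * (1 - S/((n+1:ℕ):ℝ)))^(n+1)
        = c^(n+1) * (1 - S/((n:ℝ)+1))^(n+1) := by rw [hcast, mul_pow]
      _ = c^n * (c * (1 - S/((n:ℝ)+1))^(n+1)) := by ring
      _ ≤ c^n * (1 - S/n)^n := by
          exact mul_le_mul_of_nonneg_left key (pow_nonneg hc0 n)
      _ = (c * (1 - S/n))^n := by rw [mul_pow]
      _ ≤ (c * (1 - S/2))^2 := ih

theorem stmt_3 (c : ℝ) (hc : c = 2 * Real.sqrt 2 - 2) (m : ℕ) (y : Fin m → ℝ)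
    (hy0 : ∀ i, 0 ≤ y i) (hsum : ∑ i, y i ≤ 1) :
    c * ∑ i, y i + c ^ m * ∏ i, (1 - y i) ≤ 1 := by
  have hc0 : 0 ≤ c := by have := sqrt2_lb; rw [hc]; linarith
  have hc1 : c ≤ 1 := by have := sqrt2_ub; rw [hc]; linarith
  have hS0 : 0 ≤ ∑ i, y i := Finset.sum_nonneg fun i _ => hy0 i
  have hyle : ∀ i, y i ≤ 1 := by
    intro i
    calc y i ≤ ∑ j, y j := Finset.single_le_sum (fun j _ => hy0 j) (Finset.mem_univ i)
      _ ≤ 1 := hsum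
  match m, y, hy0, hsum, hS0, hyle with
  | 0, y, hy0, hsum, hS0, hyle => simp
  | 1, y, hy0, hsum, hS0, hyle =>
    simp only [Fin.sum_univ_one, Fin.prod_univ_one, pow_one]
    have : c * y 0 + c * (1 - y 0) = c := by ring
    linarith
  | (n+2), y, hy0, hsum, hS0, hyle =>
    set S := ∑ i, y i with hS
    have hprod : ∏ i, (1 - y i) ≤ ((((n:ℝ)+2)-S)/((n:ℝ)+2))^(n+2) := by
      have h := amgm (n+2) (by omega) (fun i => 1 - y i)
        (fun i => by show (0:ℝ) ≤ 1 - y i; linarith [hyle i])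
      calc ∏ i, (1 - y i) ≤ ((∑ i, (1 - y i)) / ((n+2:ℕ):ℝ)) ^ (n+2) := h
        _ = ((((n:ℝ)+2)-S)/((n:ℝ)+2))^(n+2) := by
            rw [Finset.sum_sub_distrib, ← hS]
            push_cast; simp
    have hn2 : (0:ℝ) < (n:ℝ)+2 := by positivity
    have h2 : c^(n+2) * ∏ i, (1 - y i) ≤ (c * (1 - S/((n:ℝ)+2)))^(n+2) := by
      calc c^(n+2) * ∏ i, (1 - y i)
          ≤ c^(n+2) * ((((n:ℝ)+2)-S)/((n:ℝ)+2))^(n+2) := by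
            exact mul_le_mul_of_nonneg_left hprod (pow_nonneg hc0 _)
        _ = (c * (1 - S/((n:ℝ)+2)))^(n+2) := by
            rw [← mul_pow]
            congr 1
            field_simp
    have h3 := mono c S hc hS0 hsum (n+2) (by omega)
    push_cast at h3
    have h4 : c * S + (c * (1 - S/2))^2 ≤ 1 := by
      have l1 := sqrt2_lb; have l2 := sqrt2_ub
      have hsq : Real.sqrt 2 ^ 2 = 2 := Real.sq_sqrt (by norm_num)
      rw [hc]
      nlinarith [mul_nonneg (sub_nonneg.2 hsum) hS0, sq_nonneg (1-S),
        mul_nonneg (sub_nonneg.2 hsum) (sq_nonneg S)]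
    linarith [h2, h3, h4]
end

section
/- max over k ∈ [0,1] of (k + (1 − k²/4)·(1 + √2)) / (2 + √2) equals 2√2 − 2. -/
theorem stmt_7 :
    IsGreatest {r : ℝ | ∃ k : ℝ, 0 ≤ k ∧ k ≤ 1 ∧
      r = (k + (1 - k ^ 2 / 4) * (1 + Real.sqrt 2)) / (2 + Real.sqrt 2)}
      (2 * Real.sqrt 2 - 2) := by
  have hs : Real.sqrt 2 ^ 2 = 2 := Real.sq_sqrt (by norm_num)
  have h1 : (1:ℝ) ≤ Real.sqrt 2 := by
    nlinarith [Real.sqrt_nonneg 2]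
  have h2 : Real.sqrt 2 ≤ 2 := by nlinarith [Real.sqrt_nonneg 2]
  have hpos : (0:ℝ) < 2 + Real.sqrt 2 := by linarith
  constructor
  · refine ⟨2 * Real.sqrt 2 - 2, by linarith, by nlinarith [hs], ?_⟩
    field_simp
    nlinarith [hs]
  · rintro r ⟨k, hk0, hk1, rfl⟩
    rw [div_le_iff₀ hpos]
    nlinarith [sq_nonneg (k - (2 * Real.sqrt 2 - 2)), hs, Real.sqrt_nonneg 2]
end

section
/- For real x ≥ 3, the function f(x) = ((x+1)/x)·(1 − 1/x²)^x is nondecreasing and satisfies f(x) ≥ 2√2 − 2. -/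
/-!
On `x > 1` the function is `exp g` with `g x = log ((x + 1) / x) + x log (1 - 1/x²)`, and
`g' x = 1/(x(x - 1)) + log (1 - 1/x²)`. The bound `log y ≥ 1 - 1/y` gives
`log (1 - 1/x²) ≥ -1/(x² - 1) ≥ -1/(x(x - 1))`, so `g' ≥ 0`.
The lower bound is then the value at `3`, `(4/3)(8/9)³ = 2048/2187`, which exceeds `2√2 - 2`.
-/

open Real Set

noncomputable def logRatioPow (x : ℝ) : ℝ :=
  log ((x + 1) / x) + x * log (1 - 1 / x ^ 2)

lemma one_sub_one_div_sq_pos {x : ℝ} (hx : 1 < x) : 0 < 1 - 1 / x ^ 2 := by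
  have : 1 / x ^ 2 < 1 := by rw [div_lt_one (by positivity)]; nlinarith
  linarith

lemma exp_logRatioPow {x : ℝ} (hx : 1 < x) :
    exp (logRatioPow x) = (x + 1) / x * (1 - 1 / x ^ 2) ^ x := by
  rw [logRatioPow, exp_add, exp_log (by positivity), rpow_def_of_pos (one_sub_one_div_sq_pos hx),
    mul_comm x]

lemma hasDerivAt_logRatioPow {x : ℝ} (hx : 1 < x) :
    HasDerivAt logRatioPow (1 / (x * (x - 1)) + log (1 - 1 / x ^ 2)) x := by
  have hx0 : x ≠ 0 := by positivity
  have hx1 : x - 1 ≠ 0 := sub_ne_zero.mpr hx.ne'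
  have hsq : x ^ 2 - 1 ≠ 0 := by nlinarith
  have hratio : HasDerivAt (fun y => (y + 1) / y) (-1 / x ^ 2) x := by
    refine (((hasDerivAt_id' x).add_const 1).div (hasDerivAt_id' x) hx0).congr_deriv ?_
    ring
  have hbase : HasDerivAt (fun y => 1 - 1 / y ^ 2) (2 / x ^ 3) x := by
    refine (((hasDerivAt_const x 1).div (hasDerivAt_pow 2 x) (pow_ne_zero 2 hx0)).const_sub 1
      ).congr_deriv ?_
    field_simp
    ring
  refine ((hratio.log (by positivity)).add
    ((hasDerivAt_id' x).mul (hbase.log (one_sub_one_div_sq_pos hx).ne'))).congr_deriv ?_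
  generalize log (1 - 1 / x ^ 2) = L
  field_simp
  ring

lemma neg_one_div_sq_sub_one_le_log {x : ℝ} (hx : 1 < x) :
    -(1 / (x ^ 2 - 1)) ≤ log (1 - 1 / x ^ 2) := by
  have hsq : x ^ 2 - 1 ≠ 0 := by nlinarith
  convert one_sub_inv_le_log_of_pos (one_sub_one_div_sq_pos hx) using 1
  field_simp
  ring

lemma deriv_logRatioPow_nonneg {x : ℝ} (hx : 1 < x) :
    0 ≤ 1 / (x * (x - 1)) + log (1 - 1 / x ^ 2) := by
  have hle : 1 / (x ^ 2 - 1) ≤ 1 / (x * (x - 1)) :=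
    one_div_le_one_div_of_le (by nlinarith) (by nlinarith)
  linarith [neg_one_div_sq_sub_one_le_log hx]

lemma monotoneOn_logRatioPow : MonotoneOn logRatioPow (Ioi 1) := by
  refine monotoneOn_of_hasDerivWithinAt_nonneg
    (f' := fun x => 1 / (x * (x - 1)) + log (1 - 1 / x ^ 2)) (convex_Ioi 1)
    (fun x hx => (hasDerivAt_logRatioPow hx).continuousAt.continuousWithinAt) ?_ ?_ <;>
    rw [interior_Ioi]
  · exact fun x hx => (hasDerivAt_logRatioPow hx).hasDerivWithinAt
  · exact fun x hx => deriv_logRatioPow_nonneg hx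

lemma monotoneOn_ratio_mul_rpow :
    MonotoneOn (fun x : ℝ => (x + 1) / x * (1 - 1 / x ^ 2) ^ x) (Ioi 1) :=
  (exp_monotone.comp_monotoneOn monotoneOn_logRatioPow).congr
    fun _ hx => exp_logRatioPow hx

lemma two_mul_sqrt_two_sub_two_le_ratio_mul_rpow_three :
    2 * √2 - 2 ≤ ((3 : ℝ) + 1) / 3 * (1 - 1 / (3 : ℝ) ^ 2) ^ (3 : ℝ) := by
  have hval : ((3 : ℝ) + 1) / 3 * (1 - 1 / (3 : ℝ) ^ 2) ^ (3 : ℝ) = 2048 / 2187 := by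
    rw [show (3 : ℝ) = ((3 : ℕ) : ℝ) by norm_num, rpow_natCast]
    norm_num
  rw [hval]
  nlinarith [sq_sqrt (show (0 : ℝ) ≤ 2 by norm_num), sqrt_nonneg 2]

theorem stmt_11 :
    MonotoneOn (fun x : ℝ => ((x + 1) / x) * (1 - 1 / x ^ 2) ^ x) (Set.Ici 3) ∧
    ∀ x : ℝ, 3 ≤ x →
      ((x + 1) / x) * (1 - 1 / x ^ 2) ^ x ≥ 2 * Real.sqrt 2 - 2 := by
  have hmono := monotoneOn_ratio_mul_rpow.mono (Ici_subset_Ioi.mpr (by norm_num : (1 : ℝ) < 3))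
  exact ⟨hmono, fun x hx =>
    two_mul_sqrt_two_sub_two_le_ratio_mul_rpow_three.trans (hmono self_mem_Ici hx hx)⟩
end

section
/- If (X₀, X₁, …, X_n) are negatively associated random variables with X₀ ∈ [0,1] almost surely, and Y is a Bernoulli random variable that, conditionally on X₀ = x, equals 1 with probability x independently of everything else, then (Y, X₁, …, X_n) are negatively associated. -/
/-!
Averaging over the coin, a monotone `f` of `(Y, X₁, …, Xₙ)` becomes
`x₀ f(1, x₁, …) + (1 - x₀) f(0, x₁, …)`, a function of `X` that is again monotone (once `x₀` is
clamped to `[0, 1]`) and depends on the coordinates of `f` together with `0`. If `g` does not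
involve `Y`, Fubini therefore reduces the inequality for `(f, g)` to the NA inequality of `X`.

Since the Bochner integral is `0` off integrable functions, integrability has to be tracked
too, and NA controls it: shifting by constants shows that, when `∫ g(X) ≠ 0`, a monotone
`p(X)` is integrable iff `p(X) g(X)` is. Applied to the mixtures of `f⁺` and `f⁻`, this makes
`f(Y, X₁, …)` integrable iff `f(Y, X₁, …) g(X)` is, and the remaining cases are trivial.
-/

open MeasureTheory

/-- Random variables `Z i` (taking values in ℝ) are negatively associated under
measure `μ`: for all disjoint finite index sets `S, T` and all coordinatewise
monotone functions `f, g` depending only on coordinates in `S` (resp. `T`),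
`E[f·g] ≤ E[f]·E[g]`. -/
def NegAssoc {Ω ι : Type*} [MeasurableSpace Ω] (μ : Measure Ω) (Z : ι → Ω → ℝ) : Prop :=
  ∀ S T : Finset ι, Disjoint S T →
    ∀ f g : (ι → ℝ) → ℝ, Monotone f → Monotone g →
      (∀ a b : ι → ℝ, (∀ i ∈ S, a i = b i) → f a = f b) →
      (∀ a b : ι → ℝ, (∀ i ∈ T, a i = b i) → g a = g b) →
      ∫ ω, f (fun i => Z i ω) * g (fun i => Z i ω) ∂μ ≤
        (∫ ω, f (fun i => Z i ω) ∂μ) * ∫ ω, g (fun i => Z i ω) ∂μ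

namespace NegAssoc

variable {Ω ι : Type*} [MeasurableSpace Ω] {μ : Measure Ω}
  {X : ι → Ω → ℝ} {S T : Finset ι} {p q : (ι → ℝ) → ℝ}

theorem integral_add_const_mul_le (hX : NegAssoc μ X) (hST : Disjoint S T)
    (hp : Monotone p) (hq : Monotone q) (hpS : DependsOn p S) (hqT : DependsOn q T)
    (c d : ℝ) :
    ∫ ω, (p (X · ω) + c) * (q (X · ω) + d) ∂μ ≤
      (∫ ω, (p (X · ω) + c) ∂μ) * ∫ ω, (q (X · ω) + d) ∂μ :=
  hX S T hST (fun a => p a + c) (fun a => q a + d)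
    (fun _ _ h => add_le_add_left (hp h) c) (fun _ _ h => add_le_add_left (hq h) d)
    (fun _ _ h => by rw [hpS h]) (fun _ _ h => by rw [hqT h])

theorem integrable_iff_integrable_mul [IsProbabilityMeasure μ] (hX : NegAssoc μ X)
    (hST : Disjoint S T) (hp : Monotone p) (hq : Monotone q) (hpS : DependsOn p S)
    (hqT : DependsOn q T) (hqi : Integrable (fun ω => q (X · ω)) μ)
    (hq0 : ∫ ω, q (X · ω) ∂μ ≠ 0) :
    Integrable (fun ω => p (X · ω)) μ ↔ Integrable (fun ω => p (X · ω) * q (X · ω)) μ := by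
  constructor
  · -- With these shifts the right side of the NA inequality is `1 * (-1)`, which forces the
    -- left side to be a genuine integral.
    intro hpi
    by_contra hpq
    set c := 1 - ∫ ω, p (X · ω) ∂μ
    set d := -1 - ∫ ω, q (X · ω) ∂μ
    have hshift := integral_add_const_mul_le hX hST hp hq hpS hqT c d
    have hnot : ¬ Integrable (fun ω => (p (X · ω) + c) * (q (X · ω) + d)) μ := by
      intro h
      refine hpq ((((h.sub (hpi.mul_const d)).sub (hqi.const_mul c)).sub
        (integrable_const (c * d))).congr (Filter.Eventually.of_forall fun ω => ?_))
      simp only [Pi.sub_apply]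
      ring
    rw [integral_undef hnot, integral_add hpi (integrable_const _),
      integral_add hqi (integrable_const _)] at hshift
    simp [c, d] at hshift
    linarith
  · -- Shifting `p` by `c` moves the left side by `c * ∫ q`, so it can be made `1`, while the
    -- right side stays `0`.
    intro hpq
    by_contra hpi
    set c := (1 - ∫ ω, p (X · ω) * q (X · ω) ∂μ) / ∫ ω, q (X · ω) ∂μ
    have hshift := integral_add_const_mul_le hX hST hp hq hpS hqT c 0
    have hnot : ¬ Integrable (fun ω => p (X · ω) + c) μ := fun h =>
      hpi ((h.sub (integrable_const c)).congr (Filter.Eventually.of_forall fun ω => by simp))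
    simp only [add_zero, add_mul] at hshift
    rw [integral_undef hnot, zero_mul, integral_add hpq (hqi.const_mul c), integral_const_mul,
      div_mul_cancel₀ _ hq0] at hshift
    linarith

end NegAssoc

namespace MeasureTheory.Integrable

variable {Ω : Type*} [MeasurableSpace Ω] {μ : Measure Ω} {h k : Ω → ℝ}

theorem abs_mul_of_integrable_mul (hhk : Integrable (fun ω => h ω * k ω) μ)
    (hk : AEStronglyMeasurable k μ) : Integrable (fun ω => |h ω| * k ω) μ := by
  have hsign : AEStronglyMeasurable (fun ω => k ω / |k ω|) μ :=
    (hk.aemeasurable.div hk.aemeasurable.abs).aestronglyMeasurable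
  refine (hhk.abs.bdd_mul hsign (c := 1) (Filter.Eventually.of_forall fun ω => ?_)).congr
    (Filter.Eventually.of_forall fun ω => ?_)
  · rw [norm_div, Real.norm_eq_abs, Real.norm_eq_abs, abs_abs]
    exact div_self_le_one _
  · rcases eq_or_ne (k ω) 0 with h0 | h0
    · simp [h0]
    · simp only [abs_mul]
      field_simp

theorem max_zero_mul_of_integrable_mul (hhk : Integrable (fun ω => h ω * k ω) μ)
    (hk : AEStronglyMeasurable k μ) : Integrable (fun ω => max (h ω) 0 * k ω) μ :=
  ((hhk.add (hhk.abs_mul_of_integrable_mul hk)).div_const 2).congr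
    (Filter.Eventually.of_forall fun ω => by
      rcases le_total (h ω) 0 with h0 | h0
      · simp only [Pi.add_apply, max_eq_right h0, abs_of_nonpos h0]; ring
      · simp only [Pi.add_apply, max_eq_left h0, abs_of_nonneg h0]; ring)

theorem min_zero_mul_of_integrable_mul (hhk : Integrable (fun ω => h ω * k ω) μ)
    (hk : AEStronglyMeasurable k μ) : Integrable (fun ω => min (h ω) 0 * k ω) μ :=
  ((hhk.sub (hhk.abs_mul_of_integrable_mul hk)).div_const 2).congr
    (Filter.Eventually.of_forall fun ω => by
      rcases le_total (h ω) 0 with h0 | h0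
      · simp only [Pi.sub_apply, min_eq_left h0, abs_of_nonpos h0]; ring
      · simp only [Pi.sub_apply, min_eq_right h0, abs_of_nonneg h0]; ring)

end MeasureTheory.Integrable

section WeightedParts

open Set

variable {Ω : Type*} [MeasurableSpace Ω] {μ : Measure Ω} {x a b k : Ω → ℝ}

/-- The four functions on the right are the Bernoulli mixtures of the monotone pairs
`(f⁺, f⁺)`, `(f⁻, f⁻)`, `(f⁺, 0)`, `(0, f⁻)` when `a`, `b` are the values of `f` at the two
outcomes of the coin. -/
theorem integrable_weighted_and_iff (hx : ∀ᵐ ω ∂μ, x ω ∈ Icc 0 1)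
    (hk : AEStronglyMeasurable k μ) :
    (Integrable (fun ω => x ω * a ω * k ω) μ ∧ Integrable (fun ω => (1 - x ω) * b ω * k ω) μ) ↔
      (Integrable (fun ω => (x ω * max (a ω) 0 + (1 - x ω) * max (b ω) 0) * k ω) μ ∧
        Integrable (fun ω => (x ω * min (a ω) 0 + (1 - x ω) * min (b ω) 0) * k ω) μ ∧
        Integrable (fun ω => (x ω * max (a ω) 0 + (1 - x ω) * 0) * k ω) μ ∧
        Integrable (fun ω => (x ω * 0 + (1 - x ω) * min (b ω) 0) * k ω) μ) := by
  constructor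
  · rintro ⟨ha, hb⟩
    have haPos := ha.max_zero_mul_of_integrable_mul hk
    have haNeg := ha.min_zero_mul_of_integrable_mul hk
    have hbPos := hb.max_zero_mul_of_integrable_mul hk
    have hbNeg := hb.min_zero_mul_of_integrable_mul hk
    have hparts : ∀ᵐ ω ∂μ, x ω * max (a ω) 0 = max (x ω * a ω) 0 ∧
        x ω * min (a ω) 0 = min (x ω * a ω) 0 ∧
        (1 - x ω) * max (b ω) 0 = max ((1 - x ω) * b ω) 0 ∧
        (1 - x ω) * min (b ω) 0 = min ((1 - x ω) * b ω) 0 := by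
      filter_upwards [hx] with ω hω
      have h₀ : 0 ≤ x ω := hω.1
      have h₁ : 0 ≤ 1 - x ω := sub_nonneg.2 hω.2
      simp only [mul_max_of_nonneg _ _ h₀, mul_min_of_nonneg _ _ h₀, mul_max_of_nonneg _ _ h₁,
        mul_min_of_nonneg _ _ h₁, mul_zero, and_self]
    refine ⟨(haPos.add hbPos).congr ?_, (haNeg.add hbNeg).congr ?_, haPos.congr ?_,
      hbNeg.congr ?_⟩ <;>
      filter_upwards [hparts] with ω ⟨h₁, h₂, h₃, h₄⟩ <;>
      simp only [Pi.add_apply, h₁, h₂, h₃, h₄, mul_zero, add_zero, zero_add, add_mul]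
  · rintro ⟨hPos, hNeg, haPos, hbNeg⟩
    refine ⟨((haPos.add hNeg).sub hbNeg).congr (Filter.Eventually.of_forall fun ω => ?_),
      ((hPos.sub haPos).add hbNeg).congr (Filter.Eventually.of_forall fun ω => ?_)⟩ <;>
    simp only [Pi.add_apply, Pi.sub_apply]
    · linear_combination x ω * k ω * max_add_min (a ω) 0
    · linear_combination (1 - x ω) * k ω * max_add_min (b ω) 0

end WeightedParts

section BernoulliMix

open Set Function

variable {ι : Type*} [DecidableEq ι] (i₀ : ι)

/-- Expectation over a coin of parameter `a i₀` that sets coordinate `i₀` to `1` (evaluating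
`f₁`) or to `0` (evaluating `f₀`). Clamping the parameter keeps it monotone in `a i₀`. -/
noncomputable def bernoulliMix (f₁ f₀ : (ι → ℝ) → ℝ) (a : ι → ℝ) : ℝ :=
  (projIcc 0 1 zero_le_one (a i₀) : ℝ) * f₁ (update a i₀ 1) +
    (1 - (projIcc 0 1 zero_le_one (a i₀) : ℝ)) * f₀ (update a i₀ 0)

variable {i₀} {f₁ f₀ : (ι → ℝ) → ℝ}

theorem bernoulliMix_of_mem {a : ι → ℝ} (ha : a i₀ ∈ Icc 0 1) :
    bernoulliMix i₀ f₁ f₀ a = a i₀ * f₁ (update a i₀ 1) + (1 - a i₀) * f₀ (update a i₀ 0) := by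
  simp only [bernoulliMix, projIcc_of_mem _ ha]

theorem monotone_bernoulliMix (hf₁ : Monotone f₁) (hf₀ : Monotone f₀) (h : f₀ ≤ f₁) :
    Monotone (bernoulliMix i₀ f₁ f₀) := by
  intro a b hab
  have hupd : ∀ c : ℝ, update a i₀ c ≤ update b i₀ c := fun c =>
    update_le_update_iff.2 ⟨le_rfl, fun j _ => hab j⟩
  set s : Icc (0 : ℝ) 1 := projIcc 0 1 zero_le_one (a i₀)
  set t : Icc (0 : ℝ) 1 := projIcc 0 1 zero_le_one (b i₀)
  have hst : (s : ℝ) ≤ t := monotone_projIcc zero_le_one (hab i₀)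
  have h₁ : f₁ (update a i₀ 1) ≤ f₁ (update b i₀ 1) := hf₁ (hupd 1)
  have h₀ : f₀ (update a i₀ 0) ≤ f₀ (update b i₀ 0) := hf₀ (hupd 0)
  have h₀₁ : f₀ (update b i₀ 0) ≤ f₁ (update b i₀ 1) :=
    (h _).trans (hf₁ (update_le_update_iff'.2 zero_le_one))
  have hs := s.2
  have ht := t.2
  simp only [bernoulliMix, mem_Icc] at hs ht ⊢
  nlinarith [mul_le_mul_of_nonneg_left h₁ hs.1, mul_le_mul_of_nonneg_left h₀ (sub_nonneg.2 hs.2),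
    mul_le_mul_of_nonneg_right hst (sub_nonneg.2 h₀₁)]

theorem dependsOn_bernoulliMix {S : Finset ι} (hf₁ : DependsOn f₁ S) (hf₀ : DependsOn f₀ S) :
    DependsOn (bernoulliMix i₀ f₁ f₀) ↑(insert i₀ S) := by
  intro a b hab
  rw [Finset.coe_insert] at hab
  have hupd : ∀ c : ℝ, ∀ j ∈ (S : Set ι), update a i₀ c j = update b i₀ c j := fun c j hj => by
    rcases eq_or_ne j i₀ with rfl | hj₀
    · simp
    · simp [hj₀, hab j (mem_insert_of_mem _ hj)]
  simp only [bernoulliMix, hab i₀ (mem_insert _ _), hf₁ (hupd 1), hf₀ (hupd 0)]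

end BernoulliMix

section BernoulliMixComp

open Set Function

variable {Ω ι : Type*} [MeasurableSpace Ω] {μ : Measure Ω} [DecidableEq ι] {X : ι → Ω → ℝ}
  {i₀ : ι} {S T : Finset ι} {f₁ f₀ g : (ι → ℝ) → ℝ}

theorem bernoulliMix_comp_ae_eq (hx : ∀ᵐ ω ∂μ, X i₀ ω ∈ Icc 0 1) :
    (fun ω => bernoulliMix i₀ f₁ f₀ (X · ω)) =ᵐ[μ]
      fun ω => X i₀ ω * f₁ (update (X · ω) i₀ 1) + (1 - X i₀ ω) * f₀ (update (X · ω) i₀ 0) :=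
  hx.mono fun _ hω => bernoulliMix_of_mem hω

theorem NegAssoc.integral_mix_mul_le (hX : NegAssoc μ X) (hST : Disjoint S T) (hi₀T : i₀ ∉ T)
    (hf₁ : Monotone f₁) (hf₀ : Monotone f₀) (hf₀₁ : f₀ ≤ f₁) (hf₁S : DependsOn f₁ S)
    (hf₀S : DependsOn f₀ S) (hg : Monotone g) (hgT : DependsOn g T)
    (hx : ∀ᵐ ω ∂μ, X i₀ ω ∈ Icc 0 1) :
    ∫ ω, (X i₀ ω * f₁ (update (X · ω) i₀ 1) + (1 - X i₀ ω) * f₀ (update (X · ω) i₀ 0)) *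
        g (X · ω) ∂μ ≤
      (∫ ω, (X i₀ ω * f₁ (update (X · ω) i₀ 1) + (1 - X i₀ ω) * f₀ (update (X · ω) i₀ 0)) ∂μ) *
        ∫ ω, g (X · ω) ∂μ := by
  have hmix := bernoulliMix_comp_ae_eq (f₁ := f₁) (f₀ := f₀) hx
  have hNA := hX _ T (Finset.disjoint_insert_left.2 ⟨hi₀T, hST⟩) _ g
    (monotone_bernoulliMix hf₁ hf₀ hf₀₁) hg (fun _ _ h => dependsOn_bernoulliMix hf₁S hf₀S h)
    (fun _ _ h => hgT h)
  rw [integral_congr_ae hmix] at hNA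
  exact (integral_congr_ae (hmix.mono fun ω h => by simp only [h])).symm.trans_le hNA

theorem NegAssoc.integrable_mix_iff_integrable_mix_mul [IsProbabilityMeasure μ] (hX : NegAssoc μ X)
    (hST : Disjoint S T) (hi₀T : i₀ ∉ T) (hf₁ : Monotone f₁) (hf₀ : Monotone f₀)
    (hf₀₁ : f₀ ≤ f₁) (hf₁S : DependsOn f₁ S) (hf₀S : DependsOn f₀ S) (hg : Monotone g)
    (hgT : DependsOn g T) (hG : Integrable (fun ω => g (X · ω)) μ)
    (hG₀ : ∫ ω, g (X · ω) ∂μ ≠ 0) (hx : ∀ᵐ ω ∂μ, X i₀ ω ∈ Icc 0 1) :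
    Integrable (fun ω => X i₀ ω * f₁ (update (X · ω) i₀ 1) +
        (1 - X i₀ ω) * f₀ (update (X · ω) i₀ 0)) μ ↔
      Integrable (fun ω => (X i₀ ω * f₁ (update (X · ω) i₀ 1) +
        (1 - X i₀ ω) * f₀ (update (X · ω) i₀ 0)) * g (X · ω)) μ := by
  have hmix := bernoulliMix_comp_ae_eq (f₁ := f₁) (f₀ := f₀) hx
  refine (integrable_congr hmix).symm.trans <|
    (hX.integrable_iff_integrable_mul (Finset.disjoint_insert_left.2 ⟨hi₀T, hST⟩)
      (monotone_bernoulliMix hf₁ hf₀ hf₀₁) hg (dependsOn_bernoulliMix hf₁S hf₀S) hgT hG hG₀).trans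
    (integrable_congr (hmix.mono fun ω h => by simp only [h]))

end BernoulliMixComp

section Threshold

open Set

theorem ite_le_eq_indicator_add (x c₁ c₀ u : ℝ) :
    (if u ≤ x then c₁ else c₀) = (Iic x).indicator (fun _ => c₁ - c₀) u + c₀ := by
  by_cases h : u ≤ x <;> simp [h]

theorem integrable_ite_le_unitInterval (x c₁ c₀ : ℝ) :
    Integrable (fun u => if u ≤ x then c₁ else c₀) (volume.restrict (Icc (0 : ℝ) 1)) := by
  simp only [ite_le_eq_indicator_add x c₁ c₀]
  exact ((integrable_const _).indicator measurableSet_Iic).add (integrable_const _)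

theorem integral_ite_le_unitInterval {x : ℝ} (hx : x ∈ Icc 0 1) (c₁ c₀ : ℝ) :
    ∫ u in Icc 0 1, (if u ≤ x then c₁ else c₀) = x * c₁ + (1 - x) * c₀ := by
  simp only [ite_le_eq_indicator_add x c₁ c₀]
  rw [integral_add ((integrable_const _).indicator measurableSet_Iic) (integrable_const _),
    integral_indicator_const _ measurableSet_Iic, integral_const,
    measureReal_restrict_apply measurableSet_Iic]
  have hIcc : Iic x ∩ Icc 0 1 = Icc 0 x := Set.ext fun u => by
    simp only [mem_inter_iff, mem_Iic, mem_Icc]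
    exact ⟨fun h => ⟨h.2.1, h.1⟩, fun h => ⟨h.2, h.1, h.2.trans hx.2⟩⟩
  simp [hIcc, hx.1]
  ring

theorem ae_mem_Ioc_unitInterval : ∀ᵐ u ∂(volume.restrict (Icc (0 : ℝ) 1)), u ∈ Ioc 0 1 := by
  rw [← Measure.restrict_congr_set Ioc_ae_eq_Icc]
  exact ae_restrict_mem measurableSet_Ioc

end Threshold

section Threshold

open Set

noncomputable def threshold {Ω : Type*} (x a b : Ω → ℝ) (p : Ω × ℝ) : ℝ :=
  if p.2 ≤ x p.1 then a p.1 else b p.1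

variable {Ω : Type*} {x a b : Ω → ℝ}

theorem threshold_mul (k : Ω → ℝ) (p : Ω × ℝ) :
    threshold x a b p * k p.1 = threshold x (fun ω => a ω * k ω) (fun ω => b ω * k ω) p := by
  simp only [threshold, ite_mul]

variable [MeasurableSpace Ω] {μ : Measure Ω}

theorem integral_threshold [SFinite μ] (hx : ∀ᵐ ω ∂μ, x ω ∈ Icc 0 1)
    (hW : Integrable (threshold x a b) (μ.prod (volume.restrict (Icc 0 1)))) :
    ∫ p, threshold x a b p ∂(μ.prod (volume.restrict (Icc 0 1))) =
      ∫ ω, (x ω * a ω + (1 - x ω) * b ω) ∂μ := by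
  rw [integral_prod _ hW]
  exact integral_congr_ae (hx.mono fun ω hω => integral_ite_le_unitInterval hω (a ω) (b ω))

theorem integrable_threshold_iff (hxm : Measurable x) (hx : ∀ᵐ ω ∂μ, x ω ∈ Icc 0 1) :
    Integrable (threshold x a b) (μ.prod (volume.restrict (Icc 0 1))) ↔
      Integrable (fun ω => x ω * a ω) μ ∧ Integrable (fun ω => (1 - x ω) * b ω) μ := by
  have hs : MeasurableSet {p : Ω × ℝ | p.2 ≤ x p.1} :=
    measurableSet_le measurable_snd (hxm.comp measurable_fst)
  constructor
  · intro hW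
    have hbranch : ∀ c₁ c₀ : Ω → ℝ,
        Integrable (threshold x c₁ c₀) (μ.prod (volume.restrict (Icc 0 1))) →
        Integrable (fun ω => x ω * c₁ ω + (1 - x ω) * c₀ ω) μ := fun c₁ c₀ h =>
      h.integral_prod_left.congr
        (hx.mono fun ω hω => integral_ite_le_unitInterval hω (c₁ ω) (c₀ ω))
    refine ⟨(hbranch a 0 ((hW.indicator hs).congr ?_)).congr ?_,
      (hbranch 0 b ((hW.indicator hs.compl).congr ?_)).congr ?_⟩
    · exact .of_forall fun p => by by_cases h : p.2 ≤ x p.1 <;> simp [threshold, h]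
    · exact .of_forall fun ω => by simp
    · exact .of_forall fun p => by by_cases h : p.2 ≤ x p.1 <;> simp [threshold, h]
    · exact .of_forall fun ω => by simp
  · rintro ⟨ha, hb⟩
    -- Below the threshold the weight `x p.1` is a.e. nonzero, so there `a` is recovered
    -- measurably as `(x * a) / x`; symmetrically for `b` above it.
    have hmeas : AEStronglyMeasurable (threshold x a b) (μ.prod (volume.restrict (Icc 0 1))) := by
      have hfst := Measure.quasiMeasurePreserving_fst (μ := μ)
        (ν := volume.restrict (Icc (0 : ℝ) 1))
      have hA : AEStronglyMeasurable (fun ω => x ω * a ω / x ω) μ :=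
        ha.aestronglyMeasurable.div₀ hxm.aestronglyMeasurable
      have hB : AEStronglyMeasurable (fun ω => (1 - x ω) * b ω / (1 - x ω)) μ :=
        hb.aestronglyMeasurable.div₀ (measurable_const.sub hxm).aestronglyMeasurable
      refine (AEStronglyMeasurable.piecewise hs (hA.comp_quasiMeasurePreserving hfst).restrict
        (hB.comp_quasiMeasurePreserving hfst).restrict).congr ?_
      filter_upwards [Measure.quasiMeasurePreserving_snd.ae ae_mem_Ioc_unitInterval]
        with p ⟨hp₀, hp₁⟩
      by_cases h : p.2 ≤ x p.1
      · simp [threshold, Set.piecewise, h, mul_div_cancel_left₀ _ (hp₀.trans_le h).ne']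
      · simp [threshold, Set.piecewise, h,
          mul_div_cancel_left₀ _ (sub_ne_zero.2 (hp₁.trans_lt' (not_le.1 h)).ne')]
    refine (integrable_prod_iff hmeas).2 ⟨Filter.Eventually.of_forall fun ω =>
      integrable_ite_le_unitInterval (x ω) (a ω) (b ω), (ha.abs.add hb.abs).congr ?_⟩
    filter_upwards [hx] with ω hω
    simp only [threshold, apply_ite, Real.norm_eq_abs, integral_ite_le_unitInterval hω,
      Pi.add_apply, abs_mul, abs_of_nonneg hω.1, abs_of_nonneg (sub_nonneg.2 hω.2)]

end Threshold

section MixedThreshold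

open Set Function

variable {Ω ι : Type*} [MeasurableSpace Ω] {μ : Measure Ω} [IsProbabilityMeasure μ]
  [DecidableEq ι] {X : ι → Ω → ℝ} {i₀ : ι} {S T : Finset ι} {f g : (ι → ℝ) → ℝ}

theorem NegAssoc.integrable_threshold_iff_integrable_mul (hX : NegAssoc μ X)
    (hST : Disjoint S T) (hi₀T : i₀ ∉ T) (hf : Monotone f) (hfS : DependsOn f S)
    (hg : Monotone g) (hgT : DependsOn g T) (hxm : Measurable (X i₀))
    (hx : ∀ᵐ ω ∂μ, X i₀ ω ∈ Icc 0 1) (hG : Integrable (fun ω => g (X · ω)) μ)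
    (hG₀ : ∫ ω, g (X · ω) ∂μ ≠ 0) :
    Integrable (threshold (X i₀) (fun ω => f (update (X · ω) i₀ 1))
        (fun ω => f (update (X · ω) i₀ 0))) (μ.prod (volume.restrict (Icc 0 1))) ↔
      Integrable (threshold (X i₀) (fun ω => f (update (X · ω) i₀ 1) * g (X · ω))
        (fun ω => f (update (X · ω) i₀ 0) * g (X · ω))) (μ.prod (volume.restrict (Icc 0 1))) := by
  have hpos : Monotone fun a => max (f a) 0 := hf.sup monotone_const
  have hneg : Monotone fun a => min (f a) 0 := hf.inf monotone_const
  have hposS : DependsOn (fun a => max (f a) 0) S := fun _ _ h => congrArg (max · 0) (hfS h)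
  have hnegS : DependsOn (fun a => min (f a) 0) S := fun _ _ h => congrArg (min · 0) (hfS h)
  have hzero : DependsOn (fun _ : ι → ℝ => (0 : ℝ)) S := fun _ _ _ => rfl
  have hweighted₁ := integrable_weighted_and_iff (a := fun ω => f (update (X · ω) i₀ 1))
    (b := fun ω => f (update (X · ω) i₀ 0)) (k := fun _ => 1) hx aestronglyMeasurable_const
  have hweightedG := integrable_weighted_and_iff (a := fun ω => f (update (X · ω) i₀ 1))
    (b := fun ω => f (update (X · ω) i₀ 0)) hx hG.aestronglyMeasurable
  simp only [mul_one] at hweighted₁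
  simp only [mul_assoc] at hweightedG
  rw [integrable_threshold_iff hxm hx, integrable_threshold_iff hxm hx, hweighted₁, hweightedG]
  exact and_congr
    (hX.integrable_mix_iff_integrable_mix_mul hST hi₀T hpos hpos le_rfl hposS hposS hg hgT hG
      hG₀ hx)
    (and_congr
      (hX.integrable_mix_iff_integrable_mix_mul hST hi₀T hneg hneg le_rfl hnegS hnegS hg hgT hG
        hG₀ hx)
      (and_congr
        (hX.integrable_mix_iff_integrable_mix_mul hST hi₀T hpos monotone_const
          (fun a => le_max_right (f a) 0) hposS hzero hg hgT hG hG₀ hx)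
        (hX.integrable_mix_iff_integrable_mix_mul hST hi₀T monotone_const hneg
          (fun a => min_le_right (f a) 0) hzero hnegS hg hgT hG hG₀ hx)))

theorem NegAssoc.integral_threshold_mul_le (hX : NegAssoc μ X) (hST : Disjoint S T)
    (hi₀T : i₀ ∉ T) (hf : Monotone f) (hfS : DependsOn f S) (hg : Monotone g)
    (hgT : DependsOn g T) (hxm : Measurable (X i₀)) (hx : ∀ᵐ ω ∂μ, X i₀ ω ∈ Icc 0 1) :
    ∫ p, threshold (X i₀) (fun ω => f (update (X · ω) i₀ 1) * g (X · ω))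
        (fun ω => f (update (X · ω) i₀ 0) * g (X · ω)) p ∂(μ.prod (volume.restrict (Icc 0 1))) ≤
      (∫ p, threshold (X i₀) (fun ω => f (update (X · ω) i₀ 1))
        (fun ω => f (update (X · ω) i₀ 0)) p ∂(μ.prod (volume.restrict (Icc 0 1)))) *
      ∫ ω, g (X · ω) ∂μ := by
  set W := threshold (X i₀) (fun ω => f (update (X · ω) i₀ 1)) (fun ω => f (update (X · ω) i₀ 0))
  set WG := threshold (X i₀) (fun ω => f (update (X · ω) i₀ 1) * g (X · ω))
    (fun ω => f (update (X · ω) i₀ 0) * g (X · ω))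
  have hNA := hX.integral_mix_mul_le hST hi₀T hf hf le_rfl hfS hfS hg hgT hx
  simp only [add_mul, mul_assoc] at hNA
  by_cases hG₀ : ∫ ω, g (X · ω) ∂μ = 0
  · rw [hG₀, mul_zero] at hNA ⊢
    by_cases h : Integrable WG (μ.prod (volume.restrict (Icc 0 1)))
    · exact (integral_threshold hx h).trans_le hNA
    · rw [integral_undef h]
  · have hG : Integrable (fun ω => g (X · ω)) μ := by
      by_contra h
      exact hG₀ (integral_undef h)
    have hiff := hX.integrable_threshold_iff_integrable_mul hST hi₀T hf hfS hg hgT hxm hx hG hG₀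
    by_cases hW : Integrable W (μ.prod (volume.restrict (Icc 0 1)))
    · rw [integral_threshold hx (hiff.1 hW), integral_threshold hx hW]
      exact hNA
    · rw [integral_undef hW, integral_undef (hiff.not.1 hW), zero_mul]

end MixedThreshold

section BernoulliReplacement

open Set Function

variable {Ω ι : Type*} [DecidableEq ι]

/-- `X` with its coordinate `i₀` replaced by the indicator that an independent uniform variable
on `[0, 1]` falls below `X i₀`, i.e. by a Bernoulli variable with parameter `X i₀`. -/
noncomputable def bernoulliReplace (X : ι → Ω → ℝ) (i₀ i : ι) (p : Ω × ℝ) : ℝ :=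
  if i = i₀ then (if p.2 ≤ X i₀ p.1 then 1 else 0) else X i p.1

variable {X : ι → Ω → ℝ} {i₀ : ι}

theorem bernoulliReplace_eq_update (p : Ω × ℝ) :
    (bernoulliReplace X i₀ · p) = update (X · p.1) i₀ (if p.2 ≤ X i₀ p.1 then 1 else 0) := by
  ext i
  simp [bernoulliReplace, update_apply]

theorem comp_bernoulliReplace (f : (ι → ℝ) → ℝ) (p : Ω × ℝ) :
    f (bernoulliReplace X i₀ · p) =
      threshold (X i₀) (fun ω => f (update (X · ω) i₀ 1)) (fun ω => f (update (X · ω) i₀ 0)) p := by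
  by_cases h : p.2 ≤ X i₀ p.1 <;> simp [bernoulliReplace_eq_update, threshold, h]

theorem comp_bernoulliReplace_of_dependsOn {g : (ι → ℝ) → ℝ} {T : Set ι} (hgT : DependsOn g T)
    (hi₀T : i₀ ∉ T) (p : Ω × ℝ) : g (bernoulliReplace X i₀ · p) = g (X · p.1) :=
  hgT fun i hi => by simp [bernoulliReplace, ne_of_mem_of_not_mem hi hi₀T]

variable [MeasurableSpace Ω] {μ : Measure Ω} [IsProbabilityMeasure μ] {S T : Finset ι}
  {f g : (ι → ℝ) → ℝ}

theorem NegAssoc.integral_bernoulliReplace_mul_le (hX : NegAssoc μ X) (hST : Disjoint S T)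
    (hi₀T : i₀ ∉ T) (hf : Monotone f) (hfS : DependsOn f S) (hg : Monotone g)
    (hgT : DependsOn g T) (hxm : Measurable (X i₀)) (hx : ∀ᵐ ω ∂μ, X i₀ ω ∈ Icc 0 1) :
    ∫ p, f (bernoulliReplace X i₀ · p) * g (bernoulliReplace X i₀ · p)
        ∂(μ.prod (volume.restrict (Icc 0 1))) ≤
      (∫ p, f (bernoulliReplace X i₀ · p) ∂(μ.prod (volume.restrict (Icc 0 1)))) *
        ∫ p, g (bernoulliReplace X i₀ · p) ∂(μ.prod (volume.restrict (Icc 0 1))) := by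
  simp only [comp_bernoulliReplace_of_dependsOn hgT hi₀T, comp_bernoulliReplace f,
    threshold_mul (fun ω => g (X · ω))]
  rw [integral_fun_fst (fun ω => g (X · ω))]
  simpa using hX.integral_threshold_mul_le hST hi₀T hf hfS hg hgT hxm hx

theorem NegAssoc.bernoulliReplace (hX : NegAssoc μ X) (hxm : Measurable (X i₀))
    (hx : ∀ᵐ ω ∂μ, X i₀ ω ∈ Icc 0 1) :
    NegAssoc (μ.prod (volume.restrict (Icc 0 1))) (bernoulliReplace X i₀) := by
  intro S T hST f g hf hg hfS hgT
  by_cases hi₀T : i₀ ∈ T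
  · have hi₀S : i₀ ∉ S := fun h => Finset.disjoint_left.1 hST h hi₀T
    simpa only [mul_comm] using hX.integral_bernoulliReplace_mul_le hST.symm hi₀S hg
      (fun _ _ h => hgT _ _ h) hf (fun _ _ h => hfS _ _ h) hxm hx
  · exact hX.integral_bernoulliReplace_mul_le hST hi₀T hf (fun _ _ h => hfS _ _ h) hg
      (fun _ _ h => hgT _ _ h) hxm hx

end BernoulliReplacement

/-- If `(X 0, X 1, …, X n)` are NA with `X 0 ∈ [0,1]` a.s., then replacing `X 0`
by an independent Bernoulli with (conditional) success probability `X 0` —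
realized via an independent uniform `u ∈ [0,1]` on the product space, with
`Y (ω, u) = 1` iff `u ≤ X 0 ω` — preserves negative association. -/
theorem stmt_14 {Ω : Type*} [MeasurableSpace Ω] (μ : Measure Ω) [IsProbabilityMeasure μ]
    (n : ℕ) (X : Fin (n + 1) → Ω → ℝ) (hXmeas : ∀ i, Measurable (X i))
    (hNA : NegAssoc μ X)
    (hX0 : ∀ᵐ ω ∂μ, X 0 ω ∈ Set.Icc (0 : ℝ) 1) :
    NegAssoc (μ.prod (volume.restrict (Set.Icc (0 : ℝ) 1)))
      (fun i (p : Ω × ℝ) =>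
        if i = 0 then (if p.2 ≤ X 0 p.1 then (1 : ℝ) else 0) else X i p.1) :=
  hNA.bernoulliReplace (hXmeas 0) hX0
end

section
/- For a star graph with center p and leaves 1,…,n, independent or negatively cylinder dependent Bernoulli availabilities (A_i) with Pr[A_i = 1] ≥ 1 − c(1 − y_i) where c = 2√2 − 2 and Σᵢ yᵢ ≤ 1, the expected maximum weight matching (selecting at most one active leaf i to match to p, gaining w_i) is at least c·Σᵢ wᵢ·yᵢ for any nonnegative weights wᵢ. -/
/-!
Peeling off the smallest weight `m = w j` of `K` gives, pointwise,
`max_{active i ∈ K} w i ≥ m · 1[some i ∈ K active] + max_{active i ∈ K \ {j}} (w i - m)`,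
so by induction on `K` the expected maximum is at least `∑ i ∈ K, w i * x i` whenever every
hitting probability `Pr[some i ∈ K active]` dominates `∑ i ∈ K, x i`. For `x i = c * y i` this
follows from negative cylinder dependence, `Pr[no i ∈ K active] ≤ ∏ i ∈ K, c * (1 - y i)`, and
`∏ i ∈ K, c * (1 - y i) ≤ 1 - c * ∑ i ∈ K, y i`, which AM-GM and convexity in `∑ i ∈ K, y i`
reduce to `c ^ k * (1 - 1 / k) ^ k ≤ 1 - c`.
-/

open MeasureTheory ProbabilityTheory Finset

namespace Finset

variable {ι : Type*}

theorem prod_le_sum_div_card_pow (s : Finset ι) {z : ι → ℝ} (hz : ∀ i ∈ s, 0 ≤ z i) :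
    ∏ i ∈ s, z i ≤ ((∑ i ∈ s, z i) / #s) ^ #s := by
  rcases s.eq_empty_or_nonempty with rfl | hs
  · simp
  have hcard : (#s : ℝ) ≠ 0 := by exact_mod_cast hs.card_pos.ne'
  have hamgm := Real.geom_mean_le_arith_mean_weighted s (fun _ ↦ (#s : ℝ)⁻¹) z
    (fun _ _ ↦ by positivity) (by simp [hcard]) hz
  calc ∏ i ∈ s, z i = (∏ i ∈ s, z i ^ (#s : ℝ)⁻¹) ^ #s := by
        rw [← prod_pow]
        exact prod_congr rfl fun i hi ↦ (Real.rpow_inv_natCast_pow (hz i hi) hs.card_pos.ne').symm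
    _ ≤ ((∑ i ∈ s, z i) / #s) ^ #s := by
        rw [div_eq_inv_mul, mul_sum]
        exact pow_le_pow_left₀ (prod_nonneg fun i hi ↦ Real.rpow_nonneg (hz i hi) _) hamgm _

theorem add_fold_max_filter_erase_le [DecidableEq ι] {K : Finset ι}
    {w : ι → ℝ} {j : ι} (hmin : ∀ i ∈ K, w j ≤ w i) {q : ι → Prop} [DecidablePred q]
    (hq : ∃ i ∈ K, q i) :
    w j + ((K.erase j).filter q).fold max 0 (fun i ↦ w i - w j) ≤ (K.filter q).fold max 0 w := by
  have hle : ∀ i ∈ K, q i → w i ≤ (K.filter q).fold max 0 w := fun i hi hqi ↦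
    (le_fold_max _).2 (.inr ⟨i, mem_filter.2 ⟨hi, hqi⟩, le_rfl⟩)
  obtain ⟨i, hi, hqi⟩ := hq
  have hjM := (hmin i hi).trans (hle i hi hqi)
  have hfold : ((K.erase j).filter q).fold max 0 (fun i ↦ w i - w j) ≤
      (K.filter q).fold max 0 w - w j := by
    refine (fold_max_le _).2 ⟨sub_nonneg.2 hjM, fun k hk ↦ ?_⟩
    obtain ⟨hkK, hqk⟩ := mem_filter.1 hk
    exact sub_le_sub_right (hle k (mem_of_mem_erase hkK) hqk) _
  linarith

end Finset

section Numerics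

variable {c : ℝ}

/-- The hypothesis on `c` is the case `k = 2`; it holds exactly for `0 ≤ c ≤ 2 * √2 - 2`. -/
theorem pow_mul_one_sub_inv_pow_le (hc0 : 0 ≤ c) (hc : c ^ 2 ≤ 4 * (1 - c)) {k : ℕ} (hk : 1 ≤ k) :
    c ^ k * (1 - 1 / k) ^ k ≤ 1 - c := by
  have hc_le : c ≤ 0.83 := by nlinarith
  obtain rfl | ⟨j, rfl⟩ : k = 1 ∨ ∃ j, k = j + 2 := by
    rcases k with _ | _ | j
    · omega
    · exact .inl rfl
    · exact .inr ⟨j, rfl⟩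
  · norm_num
    linarith
  have hb : (0 : ℝ) ≤ (1 - 1 / (j + 2 : ℕ)) ^ (j + 2) := by
    refine pow_nonneg (sub_nonneg.2 ?_) _
    rw [div_le_one (by positivity)]
    norm_cast
  have hj : c ^ j * (1 - 1 / (j + 2 : ℕ)) ^ (j + 2) ≤ 1 / 4 := by
    rcases Nat.lt_or_ge j 3 with hj | hj
    · interval_cases j <;> norm_num <;> nlinarith
    have hexp : (1 - 1 / (j + 2 : ℕ) : ℝ) ^ (j + 2) ≤ 1 / 2.7 := by
      calc _ ≤ Real.exp (-1) := Real.one_sub_div_pow_le_exp_neg (by norm_cast)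
        _ ≤ 1 / 2.7 := by
          rw [Real.exp_neg, one_div]
          exact inv_anti₀ (by norm_num) (by linarith [Real.exp_one_gt_d9])
    have hcj : c ^ j ≤ 0.83 ^ 3 :=
      (pow_le_pow_of_le_one hc0 (by linarith) hj).trans (pow_le_pow_left₀ hc0 hc_le 3)
    calc _ ≤ 0.83 ^ 3 * (1 / 2.7) := mul_le_mul hcj hexp hb (by positivity)
      _ ≤ 1 / 4 := by norm_num
  calc c ^ (j + 2) * (1 - 1 / (j + 2 : ℕ)) ^ (j + 2)
      = c ^ 2 * (c ^ j * (1 - 1 / (j + 2 : ℕ)) ^ (j + 2)) := by ring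
    _ ≤ 4 * (1 - c) * (1 / 4) :=
        mul_le_mul hc hj (mul_nonneg (pow_nonneg hc0 j) hb) (by linarith)
    _ = 1 - c := by ring

theorem pow_mul_one_sub_div_pow_le (hc0 : 0 ≤ c) (hc : c ^ 2 ≤ 4 * (1 - c)) {k : ℕ} (hk : 1 ≤ k)
    {s : ℝ} (hs0 : 0 ≤ s) (hs1 : s ≤ 1) :
    c ^ k * (1 - s / k) ^ k ≤ 1 - c * s := by
  have hc1 : c ≤ 1 := by nlinarith
  have hk' : (0 : ℝ) ≤ 1 - 1 / k := by
    rw [sub_nonneg, div_le_one (by positivity)]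
    exact_mod_cast hk
  have hconvex : (1 - s / k) ^ k ≤ (1 - s) + s * (1 - 1 / k) ^ k := by
    have := (convexOn_pow k).2 (Set.mem_Ici.2 zero_le_one) (Set.mem_Ici.2 hk')
      (by linarith : 0 ≤ 1 - s) hs0 (by ring)
    have hcomb : 1 - s + s * (1 - 1 / k) = 1 - s / k := by field_simp; ring
    simpa only [smul_eq_mul, one_pow, mul_one, hcomb] using this
  have hck : c ^ k ≤ 1 := pow_le_one₀ hc0 hc1
  calc c ^ k * (1 - s / k) ^ k ≤ c ^ k * ((1 - s) + s * (1 - 1 / k) ^ k) :=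
        mul_le_mul_of_nonneg_left hconvex (pow_nonneg hc0 k)
    _ = c ^ k * (1 - s) + s * (c ^ k * (1 - 1 / k) ^ k) := by ring
    _ ≤ 1 * (1 - s) + s * (1 - c) :=
        add_le_add (mul_le_mul_of_nonneg_right hck (by linarith))
          (mul_le_mul_of_nonneg_left (pow_mul_one_sub_inv_pow_le hc0 hc hk) hs0)
    _ = 1 - c * s := by ring

theorem prod_mul_one_sub_le {ι : Type*} (hc0 : 0 ≤ c) (hc : c ^ 2 ≤ 4 * (1 - c))
    (K : Finset ι) {y : ι → ℝ} (hy0 : ∀ i ∈ K, 0 ≤ y i) (hy1 : ∑ i ∈ K, y i ≤ 1) :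
    ∏ i ∈ K, c * (1 - y i) ≤ 1 - c * ∑ i ∈ K, y i := by
  rcases K.eq_empty_or_nonempty with rfl | hK
  · simp
  have hy1' : ∀ i ∈ K, 0 ≤ 1 - y i := fun i hi ↦
    sub_nonneg.2 ((single_le_sum hy0 hi).trans hy1)
  have hmean : (∑ i ∈ K, (1 - y i)) / #K = 1 - (∑ i ∈ K, y i) / #K := by
    have : (#K : ℝ) ≠ 0 := by exact_mod_cast hK.card_pos.ne'
    rw [sum_sub_distrib, sum_const, nsmul_one]
    field_simp
  calc ∏ i ∈ K, c * (1 - y i) = c ^ #K * ∏ i ∈ K, (1 - y i) := by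
        rw [prod_mul_distrib, prod_const]
    _ ≤ c ^ #K * (1 - (∑ i ∈ K, y i) / #K) ^ #K := by
        rw [← hmean]
        exact mul_le_mul_of_nonneg_left (prod_le_sum_div_card_pow K hy1') (pow_nonneg hc0 _)
    _ ≤ 1 - c * ∑ i ∈ K, y i :=
        pow_mul_one_sub_div_pow_le hc0 hc hK.card_pos (sum_nonneg hy0) hy1

end Numerics

section ExpectedMax

variable {Ω ι : Type*} [MeasurableSpace Ω] {μ : Measure Ω} {p : ι → Ω → Prop}

theorem measurableSet_exists_mem (hp : ∀ i, MeasurableSet {ω | p i ω}) (K : Finset ι) :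
    MeasurableSet {ω | ∃ i ∈ K, p i ω} := by
  convert K.measurableSet_biUnion fun i _ ↦ hp i using 1
  ext
  simp

theorem measurable_fold_max_filter [∀ ω, DecidablePred (p · ω)]
    (hp : ∀ i, MeasurableSet {ω | p i ω}) (K : Finset ι) (w : ι → ℝ) :
    Measurable fun ω ↦ (K.filter (p · ω)).fold max 0 w := by
  classical
  induction K using Finset.induction_on with
  | empty => simp
  | insert a K ha ih =>
    have hK : ∀ ω, a ∉ K.filter (p · ω) := fun ω h ↦ ha (mem_of_mem_filter a h)
    have hsplit : (fun ω ↦ ((insert a K).filter (p · ω)).fold max 0 w) = fun ω ↦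
        if p a ω then max (w a) ((K.filter (p · ω)).fold max 0 w)
        else (K.filter (p · ω)).fold max 0 w := by
      funext ω
      split_ifs with h
      · rw [filter_insert, if_pos h, fold_insert (hK ω)]
      · rw [filter_insert, if_neg h]
    rw [hsplit]
    exact Measurable.ite (hp a) (measurable_const.max ih) ih

theorem integrable_fold_max_filter [IsFiniteMeasure μ] [∀ ω, DecidablePred (p · ω)]
    (hp : ∀ i, MeasurableSet {ω | p i ω}) (K : Finset ι) (w : ι → ℝ) :
    Integrable (fun ω ↦ (K.filter (p · ω)).fold max 0 w) μ := by
  refine .of_bound (measurable_fold_max_filter hp K w).aestronglyMeasurable (∑ i ∈ K, |w i|)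
    (.of_forall fun ω ↦ ?_)
  have hsum : 0 ≤ ∑ i ∈ K, |w i| := sum_nonneg fun i _ ↦ abs_nonneg _
  rw [Real.norm_of_nonneg ((le_fold_max _).2 (.inl le_rfl))]
  refine (fold_max_le _).2 ⟨hsum, fun i hi ↦ ?_⟩
  exact (le_abs_self _).trans (single_le_sum (fun i _ ↦ abs_nonneg (w i)) (mem_of_mem_filter i hi))

theorem sum_mul_le_integral_fold_max_filter [IsFiniteMeasure μ] [∀ ω, DecidablePred (p · ω)]
    (hp : ∀ i, MeasurableSet {ω | p i ω}) {x : ι → ℝ}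
    (hx : ∀ K : Finset ι, ∑ i ∈ K, x i ≤ μ.real {ω | ∃ i ∈ K, p i ω})
    (K : Finset ι) {w : ι → ℝ} (hw : ∀ i ∈ K, 0 ≤ w i) :
    ∑ i ∈ K, w i * x i ≤ ∫ ω, (K.filter (p · ω)).fold max 0 w ∂μ := by
  classical
  induction K using Finset.strongInduction generalizing w with
  | H K ih =>
  rcases K.eq_empty_or_nonempty with rfl | hK
  · simp
  obtain ⟨j, hj, hmin⟩ := K.exists_min_image w hK
  have hhit := measurableSet_exists_mem hp K
  have hrest := ih (K.erase j) (erase_ssubset hj) (w := fun i ↦ w i - w j)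
    fun i hi ↦ sub_nonneg.2 (hmin i (mem_of_mem_erase hi))
  have hpoint : ∀ ω, {ω | ∃ i ∈ K, p i ω}.indicator (fun _ ↦ w j) ω
      + ((K.erase j).filter (p · ω)).fold max 0 (fun i ↦ w i - w j)
      ≤ (K.filter (p · ω)).fold max 0 w := fun ω ↦ by
    by_cases h : ∃ i ∈ K, p i ω
    · rw [Set.indicator_of_mem (s := {ω | ∃ i ∈ K, p i ω}) h]
      exact add_fold_max_filter_erase_le hmin h
    · have hempty : (K.erase j).filter (p · ω) = ∅ :=
        filter_eq_empty_iff.2 fun i hi hpi ↦ h ⟨i, mem_of_mem_erase hi, hpi⟩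
      rw [Set.indicator_of_notMem (s := {ω | ∃ i ∈ K, p i ω}) h, hempty, fold_empty, zero_add]
      exact (le_fold_max _).2 (.inl le_rfl)
  calc ∑ i ∈ K, w i * x i = w j * ∑ i ∈ K, x i + ∑ i ∈ K.erase j, (w i - w j) * x i := by
        rw [← add_sum_erase K _ hj, ← add_sum_erase K _ hj]
        simp only [sub_mul, sum_sub_distrib, mul_add, mul_sum]
        ring
    _ ≤ w j * μ.real {ω | ∃ i ∈ K, p i ω}
          + ∫ ω, ((K.erase j).filter (p · ω)).fold max 0 (fun i ↦ w i - w j) ∂μ :=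
        add_le_add (mul_le_mul_of_nonneg_left (hx K) (hw j hj)) hrest
    _ = ∫ ω, ({ω | ∃ i ∈ K, p i ω}.indicator (fun _ ↦ w j) ω
          + ((K.erase j).filter (p · ω)).fold max 0 (fun i ↦ w i - w j)) ∂μ := by
        rw [integral_add ((integrable_const _).indicator hhit) (integrable_fold_max_filter hp _ _),
          integral_indicator_const _ hhit, smul_eq_mul, mul_comm]
    _ ≤ ∫ ω, (K.filter (p · ω)).fold max 0 w ∂μ :=
        integral_mono (((integrable_const _).indicator hhit).add
          (integrable_fold_max_filter hp _ _)) (integrable_fold_max_filter hp _ _) hpoint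

end ExpectedMax

section Availability

variable {Ω ι : Type*} [MeasurableSpace Ω] {μ : Measure Ω} [IsProbabilityMeasure μ]
  {A : ι → Ω → ℝ}

theorem measureReal_exists_eq_one (hA : ∀ i, Measurable (A i))
    (hBer : ∀ i ω, A i ω = 0 ∨ A i ω = 1) (K : Finset ι) :
    μ.real {ω | ∃ i ∈ K, A i ω = 1} = 1 - ∫ ω, ∏ i ∈ K, (1 - A i ω) ∂μ := by
  have hmeas : MeasurableSet {ω | ∃ i ∈ K, A i ω = 1} :=
    measurableSet_exists_mem (fun i ↦ hA i (measurableSet_singleton 1)) K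
  have hprod : (fun ω ↦ ∏ i ∈ K, (1 - A i ω)) = {ω | ∃ i ∈ K, A i ω = 1}ᶜ.indicator 1 := by
    funext ω
    by_cases h : ∃ i ∈ K, A i ω = 1
    · rw [Set.indicator_of_notMem (s := {ω | ∃ i ∈ K, A i ω = 1}ᶜ) (Set.notMem_compl_iff.2 h)]
      obtain ⟨i, hi, hAi⟩ := h
      exact prod_eq_zero hi (by rw [hAi, sub_self])
    · rw [Set.indicator_of_mem (s := {ω | ∃ i ∈ K, A i ω = 1}ᶜ) h, Pi.one_apply]
      push Not at h
      refine prod_eq_one fun i hi ↦ ?_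
      rcases hBer i ω with hAi | hAi
      · rw [hAi, sub_zero]
      · exact absurd hAi (h i hi)
  rw [hprod, integral_indicator_one hmeas.compl, probReal_compl_eq_one_sub hmeas, sub_sub_cancel]

theorem le_measureReal_exists_eq_one (hA : ∀ i, Measurable (A i))
    (hBer : ∀ i ω, A i ω = 0 ∨ A i ω = 1) {c : ℝ} (hc0 : 0 ≤ c) (hc : c ^ 2 ≤ 4 * (1 - c))
    (K : Finset ι) {y : ι → ℝ} (hy0 : ∀ i ∈ K, 0 ≤ y i) (hy1 : ∑ i ∈ K, y i ≤ 1)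
    (hmarg : ∀ i ∈ K, 1 - c * (1 - y i) ≤ μ.real {ω | A i ω = 1})
    (hNCD : ∫ ω, ∏ i ∈ K, (1 - A i ω) ∂μ ≤ ∏ i ∈ K, ∫ ω, (1 - A i ω) ∂μ) :
    c * ∑ i ∈ K, y i ≤ μ.real {ω | ∃ i ∈ K, A i ω = 1} := by
  have hsingle : ∀ i, ∫ ω, (1 - A i ω) ∂μ = 1 - μ.real {ω | A i ω = 1} := fun i ↦ by
    have := measureReal_exists_eq_one (μ := μ) hA hBer {i}
    simp only [mem_singleton, exists_eq_left, prod_singleton] at this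
    linarith
  have hprod : ∏ i ∈ K, ∫ ω, (1 - A i ω) ∂μ ≤ ∏ i ∈ K, c * (1 - y i) := by
    refine prod_le_prod (fun i _ ↦ ?_) (fun i hi ↦ ?_) <;> rw [hsingle]
    · exact sub_nonneg.2 measureReal_le_one
    · linarith [hmarg i hi]
  rw [measureReal_exists_eq_one hA hBer]
  linarith [prod_mul_one_sub_le hc0 hc K hy0 hy1]

end Availability

theorem stmt_19_general {Ω : Type*} [MeasureSpace Ω] [IsProbabilityMeasure (ℙ : Measure Ω)]
    (n : ℕ) (A : Fin n → Ω → ℝ) (hAmeas : ∀ i, Measurable (A i))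
    (hBer : ∀ i, ∀ ω, A i ω = 0 ∨ A i ω = 1)
    (hNCD2 : ∀ S : Finset (Fin n),
      ∫ ω, ∏ i ∈ S, (1 - A i ω) ≤ ∏ i ∈ S, ∫ ω, (1 - A i ω))
    (c : ℝ) (hc : c = 2 * Real.sqrt 2 - 2)
    (y : Fin n → ℝ) (hy0 : ∀ i, 0 ≤ y i) (hysum : ∑ i, y i ≤ 1)
    (hmarg : ∀ i, (ℙ {ω | A i ω = 1}).toReal ≥ 1 - c * (1 - y i))
    (w : Fin n → ℝ) (hw : ∀ i, 0 ≤ w i) :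
    ∫ ω, (Finset.univ.filter (fun i => A i ω = 1)).fold max 0 w ≥
      c * ∑ i, w i * y i := by
  have hsqrt : Real.sqrt 2 ^ 2 = 2 := Real.sq_sqrt zero_le_two
  have hc0 : 0 ≤ c := by nlinarith [Real.sqrt_nonneg 2]
  have hcsq : c ^ 2 ≤ 4 * (1 - c) := by nlinarith
  have hhit : ∀ K : Finset (Fin n),
      ∑ i ∈ K, c * y i ≤ (ℙ : Measure Ω).real {ω | ∃ i ∈ K, A i ω = 1} := fun K ↦ by
    rw [← mul_sum]
    exact le_measureReal_exists_eq_one hAmeas hBer hc0 hcsq K (fun i _ ↦ hy0 i)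
      ((sum_le_univ_sum_of_nonneg hy0).trans hysum) (fun i _ ↦ hmarg i) (hNCD2 K)
  have hmax := sum_mul_le_integral_fold_max_filter (p := fun i ω ↦ A i ω = 1)
    (fun i ↦ hAmeas i (measurableSet_singleton 1)) hhit univ fun i _ ↦ hw i
  rw [ge_iff_le, mul_sum]
  simpa only [mul_left_comm] using hmax

/-- Star CRS value bound: for a star with center `p` and leaves `1,…,n` with
nonnegative leaf weights `w`, NCD Bernoulli availabilities `A i` with
`Pr[A i = 1] ≥ 1 - c(1 - y i)` where `c = 2√2 - 2` and `∑ y ≤ 1`, the expected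
maximum weight matching (matching `p` to at most one active leaf `i`, gaining
`w i`, i.e. the max of `w` over active leaves) is at least `c · ∑ w i · y i`. -/
theorem stmt_19 {Ω : Type*} [MeasureSpace Ω] [IsProbabilityMeasure (ℙ : Measure Ω)]
    (n : ℕ) (A : Fin n → Ω → ℝ) (hAmeas : ∀ i, Measurable (A i))
    (hBer : ∀ i, ∀ ω, A i ω = 0 ∨ A i ω = 1)
    (hNCD1 : ∀ S : Finset (Fin n),
      ∫ ω, ∏ i ∈ S, A i ω ≤ ∏ i ∈ S, ∫ ω, A i ω)
    (hNCD2 : ∀ S : Finset (Fin n),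
      ∫ ω, ∏ i ∈ S, (1 - A i ω) ≤ ∏ i ∈ S, ∫ ω, (1 - A i ω))
    (c : ℝ) (hc : c = 2 * Real.sqrt 2 - 2)
    (y : Fin n → ℝ) (hy0 : ∀ i, 0 ≤ y i) (hysum : ∑ i, y i ≤ 1)
    (hmarg : ∀ i, (ℙ {ω | A i ω = 1}).toReal ≥ 1 - c * (1 - y i))
    (w : Fin n → ℝ) (hw : ∀ i, 0 ≤ w i) :
    ∫ ω, (Finset.univ.filter (fun i => A i ω = 1)).fold max 0 w ≥
      c * ∑ i, w i * y i :=
  stmt_19_general n A hAmeas hBer hNCD2 c hc y hy0 hysum hmarg w hw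
end
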